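/- Let G ≤ GL(V) be a group of linear maps on a vector space V over a field F, let Z ≤ F^× act by scalars, and let v ∈ V with v ≠ 0. If the only scalars c ∈ F^× for which c·v lies in the G-orbit of v are c = ±1, and -id ∈ G, and the G-orbit of v is regular, then the (Z∘G)-orbit of v is regular for every subgroup Z ≤ F^×. -/

import Mathlib

/-! Scalars are central, so an element of `Z∘G` fixing `v` is `g · c` with `g ∈ G` and `c ∈ Z`.
Then `g v = c⁻¹ v` lies in the `G`-orbit of `v`, forcing `c = ±1`; as `-1 ∈ G`, `g · c ∈ G` fixes
`v`, and it is trivial because the `G`-orbit is regular. -/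

theorem Subgroup.normal_of_le_center {G : Type*} [Group G] {H : Subgroup G}
    (hH : H ≤ Subgroup.center G) : H.Normal :=
  ⟨fun n hn g => by rwa [(Subgroup.mem_center_iff.mp (hH hn) g), mul_inv_cancel_right]⟩

theorem MulAction.stabilizer_sup_eq_bot {M α : Type*} [Group M] [MulAction M α]
    {K H : Subgroup M} [H.Normal] {a : α} (hK : MulAction.stabilizer K a = ⊥)
    (hH : ∀ h ∈ H, h • a ∈ MulAction.orbit K a → h ∈ K) :
    MulAction.stabilizer ↥(K ⊔ H) a = ⊥ := by
  rw [Subgroup.eq_bot_iff_forall]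
  rintro ⟨x, hx⟩ hxa
  obtain ⟨k, hk, h, hh, rfl⟩ := Subgroup.mem_sup_of_normal_right.mp hx
  replace hxa : k • h • a = a := (mul_smul k h a).symm.trans hxa
  have hha : h • a ∈ MulAction.orbit K a :=
    ⟨⟨k⁻¹, K.inv_mem hk⟩, inv_smul_eq_iff.mpr hxa.symm⟩
  have hkh : (⟨k * h, K.mul_mem hk (hH h hh hha)⟩ : K) ∈ MulAction.stabilizer K a :=
    (mul_smul k h a).trans hxa
  rw [hK, Subgroup.mem_bot] at hkh
  exact Subtype.ext (show k * h = 1 from congrArg Subtype.val hkh)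

namespace LinearMap.GeneralLinearGroup

variable {R V : Type*} [CommSemiring R] [AddCommMonoid V] [Module R V]

theorem units_map_algebraMap_smul (c : Rˣ) (w : V) :
    Units.map (algebraMap R (Module.End R V) : R →* Module.End R V) c • w = (c : R) • w :=
  Module.algebraMap_end_apply R R V (c : R) w

theorem units_map_algebraMap_mem_center (c : Rˣ) :
    Units.map (algebraMap R (Module.End R V) : R →* Module.End R V) c ∈
      Subgroup.center (GeneralLinearGroup R V) := by
  refine Subgroup.mem_center_iff.mpr fun g => Units.ext <| LinearMap.ext fun w => ?_
  change (g : Module.End R V) (algebraMap R (Module.End R V) c w) =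
    algebraMap R (Module.End R V) c ((g : Module.End R V) w)
  simp only [Module.algebraMap_end_apply, map_smul]

end LinearMap.GeneralLinearGroup

theorem regular_orbit_of_central_product_general (F : Type*) [Field F] (V : Type*)
    [AddCommGroup V] [Module F V]
    (G : Subgroup (LinearMap.GeneralLinearGroup F V)) (Z : Subgroup Fˣ)
    (v : V)
    (hscalars : ∀ c : Fˣ, (c : F) • v ∈ MulAction.orbit G v → c = 1 ∨ c = -1)
    (hneg : (-1 : LinearMap.GeneralLinearGroup F V) ∈ G)
    (hreg : MulAction.stabilizer G v = ⊥) :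
    MulAction.stabilizer ↥
      (G ⊔ (Z.map (Units.map (algebraMap F (Module.End F V) : F →* Module.End F V)) :
        Subgroup (LinearMap.GeneralLinearGroup F V))) v = ⊥ := by
  set φ := Units.map (algebraMap F (Module.End F V) : F →* Module.End F V)
  have : (Z.map φ).Normal := Subgroup.normal_of_le_center <| by
    rintro _ ⟨c, -, rfl⟩
    exact LinearMap.GeneralLinearGroup.units_map_algebraMap_mem_center c
  refine MulAction.stabilizer_sup_eq_bot hreg ?_
  rintro _ ⟨c, -, rfl⟩ hcv
  rw [LinearMap.GeneralLinearGroup.units_map_algebraMap_smul] at hcv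
  rcases hscalars c hcv with rfl | rfl
  · simp [G.one_mem]
  · convert hneg
    ext : 1
    simp [φ]

theorem regular_orbit_of_central_product (F : Type*) [Field F] (V : Type*)
    [AddCommGroup V] [Module F V]
    (G : Subgroup (LinearMap.GeneralLinearGroup F V)) (Z : Subgroup Fˣ)
    (v : V) (hv : v ≠ 0)
    (hscalars : ∀ c : Fˣ, (c : F) • v ∈ MulAction.orbit G v → c = 1 ∨ c = -1)
    (hneg : (-1 : LinearMap.GeneralLinearGroup F V) ∈ G)
    (hreg : MulAction.stabilizer G v = ⊥) :
    MulAction.stabilizer ↥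
      (G ⊔ (Z.map (Units.map (algebraMap F (Module.End F V) : F →* Module.End F V)) :
        Subgroup (LinearMap.GeneralLinearGroup F V))) v = ⊥ :=
  regular_orbit_of_central_product_general F V G Z v hscalars hneg hreg
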